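/- Let R₀ : [0,∞) → [0,∞) be continuous and strictly increasing with R₀(0) = 0 and R₀(t) → ∞ as t → ∞, and let φ_S, φ_L > 0 with φ_S > 1 > φ_L (short- and long-term hazard ratio parameters of opposite effect, i.e. the corresponding regression coefficients have opposite signs). Then the Yang–Prentice survival curve S(t) = (1 + (φ_S/φ_L) R₀(t))^(−φ_L) crosses the baseline survival curve S₀(t) = 1/(1 + R₀(t)): there exists t* > 0 such that S(t*) = S₀(t*). The same conclusion holds when φ_S < 1 < φ_L. -/

import Mathlib

/-!
Put `x = R₀ t` and `c = φ_S / φ_L`; the curves cross exactly where `(1 + c x) ^ φ_L = 1 + x`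
with `x > 0`, so it suffices to find a positive root of `G x = (1 + c x) ^ φ_L - (1 + x)`.
Since `G 0 = 0` and `G'(0) = c φ_L - 1 = φ_S - 1`, the sign of `G` just right of `0` is that of
`φ_S - 1`, while for large `x` it is that of `φ_L - 1` (`(1 + c x) ^ φ_L` grows like `x ^ φ_L`).
When these signs differ, the intermediate value theorem gives the root, and `R₀`, continuous
from `R₀ 0 = 0` to `∞`, attains it.
-/

open Real Filter Set Topology

theorem HasDerivAt.eventually_nhdsGT_lt_of_pos {f : ℝ → ℝ} {f' x : ℝ} (hf : HasDerivAt f f' x)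
    (hf' : 0 < f') : ∀ᶠ z in 𝓝[>] x, f x < f z := by
  have hslope : ∀ᶠ z in 𝓝[>] x, 0 < slope f x z :=
    (hasDerivWithinAt_iff_tendsto_slope' (lt_irrefl x)).1 hf.hasDerivWithinAt
      (Ioi_mem_nhds hf')
  filter_upwards [hslope, self_mem_nhdsWithin] with z hz hxz
  exact (slope_pos_iff hxz).1 hz

theorem exists_pos_eq_zero_of_hasDerivAt_pos {G : ℝ → ℝ} {d : ℝ} (hG : ContinuousOn G (Ioi 0))
    (h0 : G 0 = 0) (hd : HasDerivAt G d 0) (hd_pos : 0 < d) (hneg : ∀ᶠ x in atTop, G x < 0) :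
    ∃ x > 0, G x = 0 := by
  obtain ⟨a, hGa, ha⟩ := ((hd.eventually_nhdsGT_lt_of_pos hd_pos).and self_mem_nhdsWithin).exists
  obtain ⟨b, hab, hGb⟩ := ((eventually_ge_atTop a).and hneg).exists
  obtain ⟨x, hx, hGx⟩ := intermediate_value_Ioo' hab
    (hG.mono fun y hy => lt_of_lt_of_le ha hy.1) ⟨hGb, h0 ▸ hGa⟩
  exact ⟨x, lt_trans ha hx.1, hGx⟩

theorem exists_pos_eq_of_continuousOn_Ici_of_tendsto_atTop {f : ℝ → ℝ}
    (hf : ContinuousOn f (Ici 0)) (h0 : f 0 = 0) (htop : Tendsto f atTop atTop) {y : ℝ}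
    (hy : 0 < y) : ∃ t > 0, f t = y := by
  obtain ⟨b, hyb, hb⟩ := ((htop.eventually_ge_atTop y).and (eventually_ge_atTop 0)).exists
  obtain ⟨t, ht, hft⟩ := intermediate_value_Ioc hb (hf.mono Icc_subset_Ici_self)
    ⟨by rwa [h0], hyb⟩
  exact ⟨t, ht.1, hft⟩

theorem hasDerivAt_one_add_mul_rpow_zero (c φ : ℝ) :
    HasDerivAt (fun x => (1 + c * x) ^ φ) (c * φ) 0 := by
  have hlin : HasDerivAt (fun x : ℝ => 1 + c * x) c 0 := by
    simpa using ((hasDerivAt_id (0 : ℝ)).const_mul c).const_add 1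
  simpa [mul_comm] using hlin.rpow_const (p := φ) (Or.inl (by norm_num))

theorem eventually_one_add_mul_rpow_lt {c φ : ℝ} (hc : 0 ≤ c) (hφ₀ : 0 ≤ φ) (hφ : φ < 1) :
    ∀ᶠ x in atTop, (1 + c * x) ^ φ < 1 + x := by
  set C := max 1 c
  have hsmall : ∀ᶠ x in atTop, C ^ φ * (1 + x) ^ (φ - 1) < 1 := by
    have h := (tendsto_rpow_neg_atTop (y := 1 - φ) (by linarith)).comp
      (tendsto_atTop_add_const_left atTop 1 tendsto_id)
    have h' := h.const_mul (C ^ φ)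
    rw [mul_zero] at h'
    filter_upwards [h'.eventually_lt_const one_pos] with x hx
    simpa [neg_sub] using hx
  filter_upwards [hsmall, eventually_ge_atTop 0] with x hx hx₀
  have hpos : 0 < 1 + x := by linarith
  have hbase : 1 + c * x ≤ C * (1 + x) := by
    nlinarith [le_max_left 1 c, le_max_right 1 c]
  calc (1 + c * x) ^ φ ≤ (C * (1 + x)) ^ φ := rpow_le_rpow (by positivity) hbase hφ₀
    _ = C ^ φ * (1 + x) ^ (φ - 1) * (1 + x) := by
      rw [mul_rpow (by positivity) hpos.le, rpow_sub_one hpos.ne']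
      field_simp
    _ < 1 + x := by nlinarith

theorem eventually_lt_one_add_mul_rpow {c φ : ℝ} (hc : 0 < c) (hφ : 1 < φ) :
    ∀ᶠ x in atTop, 1 + x < (1 + c * x) ^ φ := by
  set m := min 1 c
  have hm : 0 < m := lt_min one_pos hc
  have hlarge : ∀ᶠ x in atTop, 1 < m ^ φ * (1 + x) ^ (φ - 1) := by
    have h := (tendsto_rpow_atTop (y := φ - 1) (by linarith)).comp
      (tendsto_atTop_add_const_left atTop 1 tendsto_id)
    exact (h.const_mul_atTop (rpow_pos_of_pos hm φ)).eventually_gt_atTop 1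
  filter_upwards [hlarge, eventually_ge_atTop 0] with x hx hx₀
  have hpos : 0 < 1 + x := by linarith
  have hbase : m * (1 + x) ≤ 1 + c * x := by
    nlinarith [min_le_left 1 c, min_le_right 1 c]
  calc 1 + x < m ^ φ * (1 + x) ^ (φ - 1) * (1 + x) := by nlinarith
    _ = (m * (1 + x)) ^ φ := by
      rw [mul_rpow hm.le hpos.le, rpow_sub_one hpos.ne']
      field_simp
    _ ≤ (1 + c * x) ^ φ := rpow_le_rpow (by positivity) hbase (by linarith)

theorem exists_pos_one_add_mul_rpow_eq {c φ : ℝ} (hc : 0 < c) (hφ : 0 < φ)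
    (hcross : (1 < c * φ ∧ φ < 1) ∨ (c * φ < 1 ∧ 1 < φ)) :
    ∃ x > 0, (1 + c * x) ^ φ = 1 + x := by
  have hcont : Continuous fun x : ℝ => (1 + c * x) ^ φ := by
    exact (continuous_const.add (continuous_const.mul continuous_id)).rpow_const
      fun _ => Or.inr hφ.le
  have hderiv := hasDerivAt_one_add_mul_rpow_zero c φ
  rcases hcross with ⟨hcφ, hφ₁⟩ | ⟨hcφ, hφ₁⟩
  · obtain ⟨x, hx, hGx⟩ := exists_pos_eq_zero_of_hasDerivAt_pos
      (G := fun x => (1 + c * x) ^ φ - (1 + x)) (by fun_prop) (by simp)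
      (by simpa using hderiv.fun_sub ((hasDerivAt_id' 0).const_add 1)) (sub_pos.2 hcφ)
      ((eventually_one_add_mul_rpow_lt hc.le hφ.le hφ₁).mono fun x => sub_neg.2)
    exact ⟨x, hx, sub_eq_zero.1 hGx⟩
  · obtain ⟨x, hx, hGx⟩ := exists_pos_eq_zero_of_hasDerivAt_pos
      (G := fun x => (1 + x) - (1 + c * x) ^ φ) (by fun_prop) (by simp)
      (by simpa using ((hasDerivAt_id' 0).const_add 1).fun_sub hderiv) (sub_pos.2 hcφ)
      ((eventually_lt_one_add_mul_rpow hc hφ₁).mono fun x => sub_neg.2)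
    exact ⟨x, hx, (sub_eq_zero.1 hGx).symm⟩

theorem yp_crossing_survival_time_general
    (R₀ : ℝ → ℝ) (hcont : ContinuousOn R₀ (Set.Ici 0))
    (hR0 : R₀ 0 = 0)
    (htop : Filter.Tendsto R₀ Filter.atTop Filter.atTop)
    (φS φL : ℝ) (hφS : 0 < φS) (hφL : 0 < φL)
    (hcross : (1 < φS ∧ φL < 1) ∨ (φS < 1 ∧ 1 < φL)) :
    ∃ t > (0:ℝ), (1 + (φS / φL) * R₀ t) ^ (-φL) = 1 / (1 + R₀ t) := by
  obtain ⟨x, hx, hroot⟩ := exists_pos_one_add_mul_rpow_eq (div_pos hφS hφL) hφL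
    (by rwa [div_mul_cancel₀ φS hφL.ne'])
  obtain ⟨t, ht, hRt⟩ := exists_pos_eq_of_continuousOn_Ici_of_tendsto_atTop hcont hR0 htop hx
  refine ⟨t, ht, ?_⟩
  rw [hRt, rpow_neg (by positivity), hroot, one_div]

/-- Crossing survival curves in the Yang–Prentice model: if the short- and
long-term hazard ratios are on opposite sides of 1 (`φ_S > 1 > φ_L` or
`φ_S < 1 < φ_L`), then the YP survival curve crosses the baseline survival
curve at some time `t* > 0`. -/
theorem yp_crossing_survival_time
    (R₀ : ℝ → ℝ) (hcont : ContinuousOn R₀ (Set.Ici 0))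
    (hmono : StrictMonoOn R₀ (Set.Ici 0)) (hR0 : R₀ 0 = 0)
    (htop : Filter.Tendsto R₀ Filter.atTop Filter.atTop)
    (φS φL : ℝ) (hφS : 0 < φS) (hφL : 0 < φL)
    (hcross : (1 < φS ∧ φL < 1) ∨ (φS < 1 ∧ 1 < φL)) :
    ∃ t > (0:ℝ), (1 + (φS / φL) * R₀ t) ^ (-φL) = 1 / (1 + R₀ t) :=
  yp_crossing_survival_time_general R₀ hcont hR0 htop φS φL hφS hφL hcross
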